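/- arXiv:1405.7580 — 3 statements merged into one kernel-verified Lean document; each statement's English description precedes it below -/
import Mathlib

section
/- For every λ > 1 and every t > (log λ)/(λ - 1), one has e^{-2t} · (λ/(λ-1)) · (1 - e^{-t(λ-1)}) > e^{-2t}. -/
open Real

/-- For every `l > 1` and every `t > log l / (l - 1)`,
`e^{-2t} * (l/(l-1)) * (1 - e^{-t(l-1)}) > e^{-2t}`. -/
theorem stmt1 (l t : ℝ) (hl : 1 < l) (ht : Real.log l / (l - 1) < t) :
    exp (-2 * t) * (l / (l - 1)) * (1 - exp (-t * (l - 1))) > exp (-2 * t) := by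
  have hl1 : (0:ℝ) < l - 1 := by linarith
  have hlog : Real.log l < t * (l - 1) := by
    have := (div_lt_iff₀ hl1).mp ht
    linarith
  have hexp : exp (-t * (l - 1)) < 1 / l := by
    rw [show (-t * (l - 1)) = -(t * (l - 1)) by ring, exp_neg]
    rw [one_div]
    apply inv_strictAnti₀ (by linarith)
    calc l = exp (Real.log l) := (exp_log (by linarith)).symm
      _ < exp (t * (l - 1)) := exp_lt_exp.mpr hlog
  have key : l / (l - 1) * (1 - exp (-t * (l - 1))) > 1 := by
    have hl0 : (0:ℝ) < l := by linarith
    have h2 : 1 - exp (-t * (l - 1)) > (l - 1) / l := by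
      have : (l - 1) / l = 1 - 1 / l := by field_simp
      rw [this]; linarith
    have h3 : l / (l - 1) * ((l - 1) / l) = 1 := by field_simp
    calc l / (l - 1) * (1 - exp (-t * (l - 1)))
        > l / (l - 1) * ((l - 1) / l) := by
          apply mul_lt_mul_of_pos_left h2 (div_pos hl0 hl1)
      _ = 1 := h3
  have hpos : 0 < exp (-2 * t) := exp_pos _
  calc exp (-2 * t) * (l / (l - 1)) * (1 - exp (-t * (l - 1)))
      = exp (-2 * t) * (l / (l - 1) * (1 - exp (-t * (l - 1)))) := by ring
    _ > exp (-2 * t) * 1 := by exact mul_lt_mul_of_pos_left key hpos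
    _ = exp (-2 * t) := mul_one _
end

section
/- The function g(λ) = (λ/(λ-1)) · (1 - e^{-t(λ-1)}), extended by continuity at λ = 1 to g(1) = t, is not monotone increasing on the interval (0,1) for every fixed t > 0; more precisely, there exist t > 0 and 0 < λ < λ' < 1 with g(λ) > g(λ'). -/
open Real

/-- The function `g(l) = (l/(l-1)) * (1 - e^{-t(l-1)})` (extended by `g(1) = t`) is not
monotone increasing on `(0,1)`: there exist `t > 0` and `0 < l < l' < 1` with
`g l > g l'`. -/
theorem stmt2 :
    ∃ t : ℝ, 0 < t ∧ ∃ l l' : ℝ, 0 < l ∧ l < l' ∧ l' < 1 ∧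
      (fun x : ℝ => if x = 1 then t else (x / (x - 1)) * (1 - exp (-t * (x - 1)))) l >
      (fun x : ℝ => if x = 1 then t else (x / (x - 1)) * (1 - exp (-t * (x - 1)))) l' := by
  refine ⟨8, by norm_num, 1/4, 1/2, by norm_num, by norm_num, by norm_num, ?_⟩
  have h1 : ((1:ℝ)/4 : ℝ) ≠ 1 := by norm_num
  have h2 : ((1:ℝ)/2 : ℝ) ≠ 1 := by norm_num
  simp only [h1, h2, if_false]
  have e6 : exp (-(8:ℝ) * (1/4 - 1)) = exp 6 := by norm_num
  have e4 : exp (-(8:ℝ) * (1/2 - 1)) = exp 4 := by norm_num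
  rw [e6, e4]
  have h46 : exp 6 = exp 4 * exp 2 := by rw [← exp_add]; norm_num
  have h2' : (3:ℝ) < exp 2 := by
    have h := exp_one_gt_d9
    have : exp 2 = exp 1 * exp 1 := by rw [← exp_add]; norm_num
    nlinarith
  have h4 : (1:ℝ) < exp 4 := by
    have := exp_pos 4
    nlinarith [add_one_le_exp (4:ℝ)]
  nlinarith [exp_pos 4]
end

section
/- Let I = ⋃_{i=0}^{k} [aᵢ, bᵢ) and I' be subsets of [0,∞), and let φ : I → I' satisfy φ(aᵢ) ≤ aᵢ, φ(t) = φ(aᵢ) + t - aᵢ on [aᵢ, bᵢ), and φ(a_{i+1}) - φ(aᵢ) ≥ a_{i+1} - aᵢ, with the images φ([aᵢ, bᵢ)) pairwise disjoint and contained in I'. Then for every t ≥ 0, the Lebesgue measure of I' ∩ [0, t] is at least the Lebesgue measure of I ∩ [0, t]. -/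
open Set MeasureTheory

/-- Volume of `Ico p q ∩ Icc 0 t` when `0 ≤ p`. -/
lemma volIcoIcc (p q t : ℝ) (hp : 0 ≤ p) :
    volume (Ico p q ∩ Icc 0 t) = ENNReal.ofReal (min q t - p) := by
  rcases le_or_gt q t with h | h
  · have he : Ico p q ∩ Icc 0 t = Ico p q := by
      apply inter_eq_left.2
      intro x hx
      exact ⟨le_trans hp hx.1, le_of_lt (lt_of_lt_of_le hx.2 h)⟩
    rw [he, Real.volume_Ico, min_eq_left h]
  · have he : Ico p q ∩ Icc 0 t = Icc p t := by
      ext x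
      constructor
      · rintro ⟨⟨h1, _⟩, _, h4⟩; exact ⟨h1, h4⟩
      · rintro ⟨h1, h2⟩
        exact ⟨⟨h1, lt_of_le_of_lt h2 h⟩, le_trans hp h1, h2⟩
    rw [he, Real.volume_Icc, min_eq_right h.le]

/-- If `φ : I → I'` translates each interval `[aᵢ, bᵢ)` of `I` leftward, preserves
lengths, with images pairwise disjoint and contained in `I'`, then for every `t ≥ 0`
the Lebesgue measure of `I' ∩ [0,t]` is at least that of `I ∩ [0,t]`. -/
theorem stmt6 (k : ℕ) (a b : Fin (k + 1) → ℝ)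
    (ha0 : 0 ≤ a 0)
    (hab : ∀ i, a i < b i)
    (hba : ∀ i : Fin k, b i.castSucc ≤ a i.succ)
    (I' : Set ℝ) (hI' : MeasurableSet I') (hI'pos : I' ⊆ Ici 0)
    (φ : ℝ → ℝ)
    (h1 : ∀ i, φ (a i) ≤ a i)
    (h2 : ∀ i, ∀ s ∈ Ico (a i) (b i), φ s = φ (a i) + s - a i)
    (h3 : ∀ i : Fin k, a i.succ - a i.castSucc ≤ φ (a i.succ) - φ (a i.castSucc))
    (hdisj : Pairwise fun i j : Fin (k + 1) =>
      Disjoint (φ '' Ico (a i) (b i)) (φ '' Ico (a j) (b j)))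
    (himg : ∀ i, φ '' Ico (a i) (b i) ⊆ I')
    (t : ℝ) (ht : 0 ≤ t) :
    volume ((⋃ i, Ico (a i) (b i)) ∩ Icc 0 t) ≤ volume (I' ∩ Icc 0 t) := by
  -- the image of each interval is an explicit Ico
  have key : ∀ i, φ '' Ico (a i) (b i) = Ico (φ (a i)) (φ (a i) + (b i - a i)) := by
    intro i
    have : EqOn φ (fun s => s + (φ (a i) - a i)) (Ico (a i) (b i)) := by
      intro s hs
      have := h2 i s hs
      simp only [this]; ring
    rw [image_congr this, image_add_const_Ico]
    ring_nf
  -- each φ (a i) is nonnegative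
  have h0 : ∀ i, 0 ≤ φ (a i) := by
    intro i
    have : φ (a i) ∈ I' := himg i ⟨a i, ⟨le_refl _, hab i⟩, rfl⟩
    exact hI'pos this
  -- termwise inequality
  have term : ∀ i, volume (Ico (a i) (b i) ∩ Icc 0 t)
      ≤ volume (Ico (φ (a i)) (φ (a i) + (b i - a i)) ∩ Icc 0 t) := by
    intro i
    have pos_cut : Ico (a i) (b i) ∩ Icc 0 t = Ico (max (a i) 0) (b i) ∩ Icc 0 t := by
      ext x
      simp only [mem_inter_iff, mem_Ico, mem_Icc, max_le_iff]
      tauto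
    rw [pos_cut, volIcoIcc _ _ _ (le_max_right _ _),
      volIcoIcc _ _ _ (h0 i)]
    apply ENNReal.ofReal_le_ofReal
    have := h1 i
    have := h0 i
    have hmax : a i ≤ max (a i) 0 := le_max_left _ _
    rcases le_total (b i) t with hbt | hbt <;>
      rcases le_total (φ (a i) + (b i - a i)) t with hft | hft <;>
      simp [min_eq_left, min_eq_right, hbt, hft] <;> linarith
  -- disjointness and measurability of the image intervals intersected with [0,t]
  have hdisj' : Pairwise (Function.onFun Disjoint
      fun i => Ico (φ (a i)) (φ (a i) + (b i - a i)) ∩ Icc 0 t) := by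
    intro i j hij
    have hd : Disjoint (φ '' Ico (a i) (b i)) (φ '' Ico (a j) (b j)) := hdisj hij
    rw [key i, key j] at hd
    exact hd.mono inter_subset_left inter_subset_left
  have hmeas : ∀ i : Fin (k + 1),
      MeasurableSet (Ico (φ (a i)) (φ (a i) + (b i - a i)) ∩ Icc 0 t) :=
    fun i => measurableSet_Ico.inter measurableSet_Icc
  calc volume ((⋃ i, Ico (a i) (b i)) ∩ Icc 0 t)
      = volume (⋃ i, Ico (a i) (b i) ∩ Icc 0 t) := by rw [iUnion_inter]
    _ ≤ ∑' i, volume (Ico (a i) (b i) ∩ Icc 0 t) := measure_iUnion_le _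
    _ ≤ ∑' i, volume (Ico (φ (a i)) (φ (a i) + (b i - a i)) ∩ Icc 0 t) :=
        ENNReal.tsum_le_tsum term
    _ = volume (⋃ i, Ico (φ (a i)) (φ (a i) + (b i - a i)) ∩ Icc 0 t) :=
        (measure_iUnion hdisj' hmeas).symm
    _ ≤ volume (I' ∩ Icc 0 t) := by
        apply measure_mono
        apply iUnion_subset
        intro i
        exact inter_subset_inter_left _ (by rw [← key i]; exact himg i)
end
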